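/- Let μ be a Borel probability measure on ℝ with ∫_ℝ e^{θu} dμ(u) < ∞ for all θ ∈ ℝ. For l > 0 define f_l(u) = min(max(u, −l), l), h_l(x) = sup_{θ∈ℝ} (θx − ln ∫_ℝ e^{θ f_l(u)} dμ(u)), and h(x) = sup_{θ∈ℝ} (θx − ln ∫_ℝ e^{θu} dμ(u)). Then for every ε > 0 there exists L(ε) < ∞ such that for all l > L(ε) and all x ∈ ℝ, h(x) ≤ h_l(x) + ε. -/

import Mathlib

/-!
Fix `l ≥ 0`, `θ`, and put `b = e^{-|θ| l}`, `δ = μ(|u| > l)`. Truncation only moves points with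
`|u| > l`, and there `e^{θ f_l(u)} ≤ max (e^{θu}) b`; hence `M_l(θ) ≤ M(θ) + b δ`. On `|u| ≤ l`
we have `e^{θu} ≥ b`, hence `b (1 - δ) ≤ M(θ)`. Together `(1 - δ) M_l(θ) ≤ M(θ)` for every `θ`,
so `ln M_l ≤ ln M + ε` as soon as `δ < 1 - e^{-ε}`, which holds for large `l` because a single
finite measure on `ℝ` is tight. Taking suprema over `θ` gives `h ≤ h_l + ε`.
-/

open MeasureTheory Filter Set
open scoped ENNReal Topology

noncomputable section

/-- Truncation `f_l` at level `l`. -/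
def trunc (l q : ℝ) : ℝ := min (max q (-l)) l

/-- The Cramér transform `h(x) = sup_θ (θx − ln ∫ e^{θu} dμ(u))`, as an extended
real number. -/
def cramerE (μ : Measure ℝ) (x : ℝ) : EReal :=
  ⨆ θ : ℝ, ((θ * x - Real.log (∫ u, Real.exp (θ * u) ∂μ) : ℝ) : EReal)

/-- The Cramér transform of the truncated variable,
`h_l(x) = sup_θ (θx − ln ∫ e^{θ f_l(u)} dμ(u))`, as an extended real number. -/
def cramerTruncE (μ : Measure ℝ) (l x : ℝ) : EReal :=
  ⨆ θ : ℝ, ((θ * x - Real.log (∫ u, Real.exp (θ * trunc l u) ∂μ) : ℝ) : EReal)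

open ProbabilityTheory Real

@[fun_prop]
lemma continuous_trunc (l : ℝ) : Continuous (trunc l) :=
  (continuous_id.max continuous_const).min continuous_const

lemma trunc_of_abs_le {l u : ℝ} (h : |u| ≤ l) : trunc l u = u := by
  rw [abs_le] at h
  rw [trunc, max_eq_left h.1, min_eq_left h.2]

lemma trunc_eq_or {l : ℝ} (hl : 0 ≤ l) (u : ℝ) :
    trunc l u = u ∨ (trunc l u = l ∧ l ≤ u) ∨ (trunc l u = -l ∧ u ≤ -l) := by
  unfold trunc
  grind

lemma abs_trunc_le {l : ℝ} (hl : 0 ≤ l) (u : ℝ) : |trunc l u| ≤ l :=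
  abs_le.mpr ⟨le_min (le_max_right _ _) (by linarith), min_le_right _ _⟩

lemma abs_mul_le_of_abs_le {θ u l : ℝ} (h : |u| ≤ l) : |θ * u| ≤ |θ| * l :=
  abs_mul θ u ▸ mul_le_mul_of_nonneg_left h (abs_nonneg θ)

lemma mul_trunc_le_max {l : ℝ} (hl : 0 ≤ l) (θ u : ℝ) :
    θ * trunc l u ≤ max (θ * u) (-(|θ| * l)) := by
  rw [le_max_iff]
  rcases trunc_eq_or hl u with h | ⟨h, hu⟩ | ⟨h, hu⟩ <;> rw [h] <;>
    rcases le_total 0 θ with hθ | hθ <;> simp only [abs_of_nonneg, abs_of_nonpos, hθ]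
  all_goals first | (left; nlinarith) | (right; nlinarith)

lemma exp_mul_trunc_le_add_indicator {l : ℝ} (hl : 0 ≤ l) (θ u : ℝ) :
    exp (θ * trunc l u) ≤
      exp (θ * u) + {v | l < |v|}.indicator (fun _ ↦ exp (-(|θ| * l))) u := by
  by_cases hu : l < |u|
  · rw [indicator_of_mem (show u ∈ {v | l < |v|} from hu)]
    calc exp (θ * trunc l u) ≤ max (exp (θ * u)) (exp (-(|θ| * l))) :=
          exp_monotone.map_max ▸ exp_le_exp.mpr (mul_trunc_le_max hl θ u)
      _ ≤ _ := max_le_add_of_nonneg (exp_pos _).le (exp_pos _).le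
  · rw [indicator_of_notMem (show u ∉ {v | l < |v|} from hu), trunc_of_abs_le (not_lt.mp hu),
      add_zero]

variable {μ : Measure ℝ} {l θ : ℝ}

lemma integrable_exp_mul_trunc [IsFiniteMeasure μ] (hl : 0 ≤ l) (θ : ℝ) :
    Integrable (fun u ↦ exp (θ * trunc l u)) μ := by
  refine .of_bound (by fun_prop) (exp (|θ| * l)) (ae_of_all _ fun u ↦ ?_)
  rw [norm_of_nonneg (exp_pos _).le, exp_le_exp]
  exact (abs_le.mp (abs_mul_le_of_abs_le (abs_trunc_le hl u))).2

lemma mgf_trunc_le_add [IsFiniteMeasure μ] (hl : 0 ≤ l)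
    (hθ : Integrable (fun u ↦ exp (θ * u)) μ) :
    mgf (trunc l) μ θ ≤ mgf id μ θ + exp (-(|θ| * l)) * μ.real {u | l < |u|} := by
  have hS : MeasurableSet {u : ℝ | l < |u|} := measurableSet_lt measurable_const measurable_abs
  have hind := (integrable_const (μ := μ) (exp (-(|θ| * l)))).indicator hS
  calc mgf (trunc l) μ θ
      ≤ ∫ u, exp (θ * u) + {v | l < |v|}.indicator (fun _ ↦ exp (-(|θ| * l))) u ∂μ :=
        integral_mono (integrable_exp_mul_trunc hl θ) (hθ.add hind)
          (exp_mul_trunc_le_add_indicator hl θ)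
    _ = _ := by
        rw [integral_add hθ hind, integral_indicator_const _ hS, smul_eq_mul, mul_comm]; rfl

lemma exp_mul_measureReal_le_mgf [IsFiniteMeasure μ]
    (hθ : Integrable (fun u ↦ exp (θ * u)) μ) :
    exp (-(|θ| * l)) * μ.real {u | |u| ≤ l} ≤ mgf id μ θ := by
  have hS : MeasurableSet {u : ℝ | |u| ≤ l} := measurableSet_le measurable_abs measurable_const
  calc exp (-(|θ| * l)) * μ.real {u | |u| ≤ l}
      = ∫ u, {v | |v| ≤ l}.indicator (fun _ ↦ exp (-(|θ| * l))) u ∂μ := by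
        rw [integral_indicator_const _ hS, smul_eq_mul, mul_comm]
    _ ≤ mgf id μ θ := integral_mono ((integrable_const _).indicator hS) hθ fun u ↦ by
        by_cases hu : |u| ≤ l
        · rw [indicator_of_mem (show u ∈ {v | |v| ≤ l} from hu)]
          exact exp_le_exp.mpr (abs_le.mp (abs_mul_le_of_abs_le hu)).1
        · rw [indicator_of_notMem (show u ∉ {v | |v| ≤ l} from hu)]
          exact (exp_pos _).le

lemma one_sub_measureReal_mul_mgf_trunc_le [IsProbabilityMeasure μ] (hl : 0 ≤ l)
    (hθ : Integrable (fun u ↦ exp (θ * u)) μ) :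
    (1 - μ.real {u | l < |u|}) * mgf (trunc l) μ θ ≤ mgf id μ θ := by
  set δ := μ.real {u | l < |u|}
  have hcompl : μ.real {u | |u| ≤ l} = 1 - δ := by
    rw [← probReal_compl_eq_one_sub (measurableSet_lt measurable_const measurable_abs)]
    simp only [compl_ofPred, not_lt]
  have hlow := exp_mul_measureReal_le_mgf (l := l) hθ
  rw [hcompl] at hlow
  have hup := mgf_trunc_le_add hl hθ
  have hδ : δ ≤ 1 := measureReal_le_one
  nlinarith [measureReal_nonneg (μ := μ) (s := {u | l < |u|})]

lemma tendsto_measureReal_abs_gt_atTop [IsFiniteMeasure μ] :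
    Tendsto (fun l ↦ μ.real {u | l < |u|}) atTop (𝓝 0) := by
  have := tendsto_measure_norm_gt_of_isTightMeasureSet (isTightMeasureSet_singleton (μ := μ))
  simp only [mem_singleton_iff, iSup_iSup_eq_left, Real.norm_eq_abs] at this
  exact (ENNReal.tendsto_toReal ENNReal.zero_ne_top).comp this

lemma eventually_cgf_trunc_le [IsProbabilityMeasure μ]
    (hmgf : ∀ θ, Integrable (fun u ↦ exp (θ * u)) μ) {ε : ℝ} (hε : 0 < ε) :
    ∀ᶠ l in atTop, ∀ θ, cgf (trunc l) μ θ ≤ cgf id μ θ + ε := by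
  have hpos : 0 < 1 - exp (-ε) := sub_pos.mpr (exp_lt_one_iff.mpr (neg_lt_zero.mpr hε))
  filter_upwards [(tendsto_measureReal_abs_gt_atTop (μ := μ)).eventually (gt_mem_nhds hpos),
    eventually_ge_atTop 0] with l hδ hl θ
  have hA := mgf_pos (X := trunc l) (integrable_exp_mul_trunc (μ := μ) hl θ)
  have hexp : exp (-ε) * mgf (trunc l) μ θ ≤ mgf id μ θ :=
    (mul_le_mul_of_nonneg_right (by linarith) hA.le).trans
      (one_sub_measureReal_mul_mgf_trunc_le hl (hmgf θ))
  have hlog := log_le_log (by positivity) hexp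
  rw [log_mul (exp_ne_zero _) hA.ne', log_exp] at hlog
  rw [cgf, cgf]
  linarith

lemma cramerE_le_cramerTruncE_add {c : ℝ} (h : ∀ θ, cgf (trunc l) μ θ ≤ cgf id μ θ + c)
    (x : ℝ) : cramerE μ x ≤ cramerTruncE μ l x + c := by
  refine iSup_le fun θ ↦ ?_
  have hθ : log (∫ u, exp (θ * trunc l u) ∂μ) ≤ log (∫ u, exp (θ * u) ∂μ) + c := h θ
  calc ((θ * x - log (∫ u, exp (θ * u) ∂μ) : ℝ) : EReal)
      ≤ ((θ * x - log (∫ u, exp (θ * trunc l u) ∂μ) + c : ℝ) : EReal) :=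
        EReal.coe_le_coe_iff.mpr (by linarith)
    _ = ((θ * x - log (∫ u, exp (θ * trunc l u) ∂μ) : ℝ) : EReal) + c := EReal.coe_add _ _
    _ ≤ cramerTruncE μ l x + c :=
        add_le_add_left (le_iSup (fun θ ↦
          ((θ * x - log (∫ u, exp (θ * trunc l u) ∂μ) : ℝ) : EReal)) θ) _

/-- **Lemma (truncation of the Cramér transform).**
If `μ` is a Borel probability measure on `ℝ` with everywhere-finite moment
generating function, then for every `ε > 0` there is `L(ε) < ∞` such that for all
`l > L(ε)` and all `x ∈ ℝ`, `h(x) ≤ h_l(x) + ε`. -/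
theorem cramer_truncation_bound
    (μ : Measure ℝ) [IsProbabilityMeasure μ]
    (hmgf : ∀ θ : ℝ, Integrable (fun u => Real.exp (θ * u)) μ) :
    ∀ ε : ℝ, 0 < ε → ∃ L : ℝ, ∀ l : ℝ, L < l → ∀ x : ℝ,
      cramerE μ x ≤ cramerTruncE μ l x + (ε : EReal) := by
  intro ε hε
  obtain ⟨L, hL⟩ := eventually_atTop.mp (eventually_cgf_trunc_le hmgf hε)
  exact ⟨L, fun l hl ↦ cramerE_le_cramerTruncE_add (hL l hl.le)⟩

end
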